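/- For n ≥ 2 and any element (a|b) ∈ W^odd ∩ W^P with (a|b) ≠ (2̄|3̄), there exists (c|d) ∈ W^odd ∩ W^P with (a|b) < (c|d) in Bruhat order and ℓ(c|d) = ℓ(a|b) + 1. -/

import Mathlib

/-- `w(t_i - t_j)` is a negative root (type `C`). -/
abbrev DiffNeg (x y : ℤ) : Prop :=
  (x < 0 ∧ 0 < y) ∨ (0 < x ∧ 0 < y ∧ y < x) ∨ (x < 0 ∧ y < 0 ∧ y < x)

/-- `w(t_i + t_j)` is a negative root (type `C`). -/
abbrev SumNeg (x y : ℤ) : Prop :=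
  (x < 0 ∧ y < 0) ∨ (x < 0 ∧ 0 < y ∧ 0 < x + y) ∨ (0 < x ∧ y < 0 ∧ 0 < x + y)

/-- Coxeter length of a signed permutation of `{±1,…,±m}` given by its
window `f : Fin m → ℤ`. -/
def clen (m : ℕ) (f : Fin m → ℤ) : ℕ :=
  (Finset.univ.filter fun p : Fin m × Fin m => p.1 < p.2 ∧ DiffNeg (f p.1) (f p.2)).card +
  (Finset.univ.filter fun p : Fin m × Fin m => p.1 < p.2 ∧ SumNeg (f p.1) (f p.2)).card +
  (Finset.univ.filter fun i : Fin m => f i < 0).card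

/-- The window of the minimal length representative of the coset `(x|y)` in
`W/W_P` (type `C_{n+1}`, `P` excluding `s₁, s₂`): first `x`, then `y`, then
the remaining positive values in increasing order. -/
def minRep (n : ℕ) (x y : ℤ) : Fin (n + 1) → ℤ := fun i =>
  if (i : ℕ) = 0 then x
  else if (i : ℕ) = 1 then y
  else (((((Finset.Icc 1 (n + 1)).filter
      (fun v : ℕ => (v : ℤ) ≠ |x| ∧ (v : ℤ) ≠ |y|)).sort (· ≤ ·)).getD
      ((i : ℕ) - 2) 0 : ℕ) : ℤ)

/-- Length of the minimal length coset representative `(x|y)`. -/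
def plen (n : ℕ) (x y : ℤ) : ℕ := clen (n + 1) (minRep n x y)

/-- The position of the signed value `x` in the linear order
`1 < 2 < ⋯ < n+1 < n+1̄ < ⋯ < 1̄` (where `ī = 2n+3-i`). -/
def idx (n : ℕ) (x : ℤ) : ℤ := if 0 < x then x else 2 * (n : ℤ) + 3 + x

/-- Tableau criterion for the Bruhat order on `W^P`:
`(x|y) ≤ (c|d)` iff `x ≤ c` and the sorted pairs compare componentwise. -/
def tabLe (n : ℕ) (x y c d : ℤ) : Prop :=
  idx n x ≤ idx n c ∧ min (idx n x) (idx n y) ≤ min (idx n c) (idx n d) ∧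
    max (idx n x) (idx n y) ≤ max (idx n c) (idx n d)

/-!
Write `p = idx n x`, `q = idx n y` for the positions of the two entries in the order
`1 < ⋯ < n+1 < n+1̄ < ⋯ < 1̄`. Counting the inversions of the minimal coset
representative `(x, y, remaining positive values in increasing order)` gives
`ℓ(x|y) = p + q - 2 - [p < q] - [p + q > 2n + 3]`, and `(x|y)` is odd symplectic exactly
when `1 ≤ p, q ≤ 2n + 1`, `p ≠ q` and `p + q ≠ 2n + 3`. In these coordinates a cover of every
non-maximal pair can be written down explicitly.
-/

def pairInv (a b : ℤ) : ℕ := (if DiffNeg a b then 1 else 0) + if SumNeg a b then 1 else 0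

def pairInvSum (m : ℕ) (f : Fin m → ℤ) : ℕ := ∑ i, ∑ j, if i < j then pairInv (f i) (f j) else 0

lemma clen_eq_pairInvSum_add (m : ℕ) (f : Fin m → ℤ) :
    clen m f = pairInvSum m f + ∑ i, if f i < 0 then 1 else 0 := by
  simp only [clen, pairInvSum, Finset.card_filter, Fintype.sum_prod_type,
    ← Finset.sum_add_distrib]
  refine Finset.sum_congr rfl fun i _ => congrArg (· + _) <| Finset.sum_congr rfl fun j _ => ?_
  unfold pairInv
  split_ifs <;> simp_all

lemma pairInvSum_succ (m : ℕ) (g : Fin (m + 1) → ℤ) :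
    pairInvSum (m + 1) g =
      ∑ j : Fin m, pairInv (g 0) (g j.succ) + pairInvSum m fun i => g i.succ := by
  simp [pairInvSum, Fin.sum_univ_succ, Fin.succ_pos, Fin.succ_lt_succ_iff]

lemma pairInv_eq_zero_of_pos_of_lt {a b : ℤ} (ha : 0 < a) (hab : a < b) : pairInv a b = 0 := by
  simp only [pairInv, DiffNeg, SumNeg]
  split_ifs <;> omega

lemma pairInvSum_eq_zero {m : ℕ} {t : Fin m → ℤ} (ht : StrictMono t) (hpos : ∀ j, 0 < t j) :
    pairInvSum m t = 0 :=
  Finset.sum_eq_zero fun i _ => Finset.sum_eq_zero fun j _ => by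
    split_ifs with h
    exacts [pairInv_eq_zero_of_pos_of_lt (hpos i) (ht h), rfl]

lemma clen_cons_cons {k : ℕ} (x y : ℤ) {t : Fin k → ℤ} (ht : StrictMono t)
    (hpos : ∀ j, 0 < t j) :
    clen (k + 2) (Fin.cons x (Fin.cons y t)) =
      pairInv x y + ∑ j, (pairInv x (t j) + pairInv y (t j)) +
        ((if x < 0 then 1 else 0) + if y < 0 then 1 else 0) := by
  have hneg : (∑ i, if (Fin.cons x (Fin.cons y t) : Fin (k + 2) → ℤ) i < 0 then 1 else 0) =
      (if x < 0 then 1 else 0) + if y < 0 then 1 else 0 := by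
    rw [Fin.sum_univ_succ, Fin.sum_univ_succ]
    simp [(hpos _).not_gt]
  rw [clen_eq_pairInvSum_add, pairInvSum_succ, pairInvSum_succ, hneg]
  simp only [Fin.cons_zero, Fin.cons_succ, pairInvSum_eq_zero ht hpos, Fin.sum_univ_succ,
    Finset.sum_add_distrib]
  omega

lemma sum_filter_ne_ne_add {α M : Type*} [DecidableEq α] [AddCommMonoid M] {s : Finset α}
    {a b : α} (ha : a ∈ s) (hb : b ∈ s) (hab : a ≠ b) (f : α → M) :
    ∑ v ∈ s.filter (fun v => v ≠ a ∧ v ≠ b), f v + f a + f b = ∑ v ∈ s, f v := by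
  have hs : s.filter (fun v => v ≠ a ∧ v ≠ b) = (s.erase a).erase b := by
    ext v; simp only [Finset.mem_filter, Finset.mem_erase]; tauto
  rw [hs, add_right_comm, Finset.sum_erase_add _ _ (Finset.mem_erase.2 ⟨hab.symm, hb⟩),
    Finset.sum_erase_add _ _ ha]

def restVals (n : ℕ) (x y : ℤ) : Finset ℕ :=
  (Finset.Icc 1 (n + 1)).filter (fun v : ℕ => (v : ℤ) ≠ |x| ∧ (v : ℤ) ≠ |y|)

lemma sum_restVals_add {M : Type*} [AddCommMonoid M] (n : ℕ) {x y : ℤ}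
    (hx : 1 ≤ |x| ∧ |x| ≤ (n : ℤ) + 1) (hy : 1 ≤ |y| ∧ |y| ≤ (n : ℤ) + 1) (hxy : |x| ≠ |y|)
    (f : ℕ → M) :
    ∑ v ∈ restVals n x y, f v + f x.natAbs + f y.natAbs = ∑ v ∈ Finset.Icc 1 (n + 1), f v := by
  have hx' := Int.natCast_natAbs x
  have hy' := Int.natCast_natAbs y
  have hrest : restVals n x y =
      (Finset.Icc 1 (n + 1)).filter (fun v => v ≠ x.natAbs ∧ v ≠ y.natAbs) :=
    Finset.filter_congr fun v _ => by omega
  rw [hrest]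
  exact sum_filter_ne_ne_add (by simp only [Finset.mem_Icc]; omega)
    (by simp only [Finset.mem_Icc]; omega) (by omega) f

lemma minRep_eq_cons (k : ℕ) (x y : ℤ) (h : (restVals (k + 1) x y).card = k) :
    minRep (k + 1) x y =
      Fin.cons x (Fin.cons y fun j => ((restVals (k + 1) x y).orderEmbOfFin h j : ℤ)) := by
  funext i
  refine Fin.cases ?_ (fun i => Fin.cases ?_ (fun j => ?_) i) i
  · simp [minRep]
  · simp [minRep]
  · have hj : (j : ℕ) < ((restVals (k + 1) x y).sort).length := by
      rw [Finset.length_sort, h]; exact j.isLt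
    rw [Fin.cons_succ, Fin.cons_succ, Finset.orderEmbOfFin_apply, Fin.getElem_fin,
      ← List.getD_eq_getElem _ 0 hj]
    simp [minRep, restVals]

lemma pairInv_abs_self (x : ℤ) : pairInv x |x| = if x < 0 then 1 else 0 := by
  simp only [pairInv, DiffNeg, SumNeg]
  rcases abs_cases x with ⟨h, _⟩ | ⟨h, _⟩ <;> rw [h] <;> split_ifs <;> omega

lemma pairInv_abs_add_pairInv_abs (n : ℕ) {x y : ℤ} (hx : x ≠ 0) (hy : y ≠ 0)
    (hxn : |x| ≤ n + 1) (hyn : |y| ≤ n + 1) (hxy : |x| ≠ |y|) :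
    (pairInv x |y| + pairInv y |x| : ℤ) = pairInv x y + (if idx n x < idx n y then 1 else 0) +
      if 2 * (n : ℤ) + 3 < idx n x + idx n y then 1 else 0 := by
  simp only [pairInv, DiffNeg, SumNeg, idx]
  rcases abs_cases x with ⟨hx', _⟩ | ⟨hx', _⟩ <;> rcases abs_cases y with ⟨hy', _⟩ | ⟨hy', _⟩ <;>
    simp only [hx', hy'] at hxn hyn hxy ⊢ <;> simp (disch := omega) only [if_pos, if_neg] <;>
    push_cast <;> split_ifs <;> omega

lemma sum_pairInv_Icc (n : ℕ) {x : ℤ} (hx : x ≠ 0) (hxn : |x| ≤ n + 1) :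
    ((∑ v ∈ Finset.Icc 1 (n + 1), pairInv x v : ℕ) : ℤ) = idx n x - 1 := by
  rw [Nat.cast_sum]
  simp only [pairInv, Nat.cast_add, Nat.cast_ite, Nat.cast_one, Nat.cast_zero,
    Finset.sum_add_distrib, Finset.sum_boole]
  rcases lt_or_gt_of_ne hx with hneg | hpos
  · rw [abs_of_neg hneg] at hxn
    have hD : (Finset.Icc 1 (n + 1)).filter (fun v : ℕ => DiffNeg x v) = Finset.Icc 1 (n + 1) :=
      Finset.filter_true_of_mem fun v hv => by simp only [Finset.mem_Icc] at hv; omega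
    have hS : (Finset.Icc 1 (n + 1)).filter (fun v : ℕ => SumNeg x v) =
        Finset.Ioc x.natAbs (n + 1) := by
      ext v; simp only [Finset.mem_filter, Finset.mem_Icc, Finset.mem_Ioc]; omega
    rw [hD, hS, Nat.card_Icc, Nat.card_Ioc, idx, if_neg hneg.not_gt]
    omega
  · rw [abs_of_pos hpos] at hxn
    have hD : (Finset.Icc 1 (n + 1)).filter (fun v : ℕ => DiffNeg x v) =
        Finset.Ico 1 x.natAbs := by
      ext v; simp only [Finset.mem_filter, Finset.mem_Icc, Finset.mem_Ico]; omega
    have hS : (Finset.Icc 1 (n + 1)).filter (fun v : ℕ => SumNeg x v) = ∅ :=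
      Finset.filter_false_of_mem fun v _ => by omega
    rw [hD, hS, Nat.card_Ico, Finset.card_empty, idx, if_pos hpos]
    omega

def idxLen (n : ℕ) (p q : ℤ) : ℤ :=
  p + q - 2 - (if p < q then 1 else 0) - if 2 * (n : ℤ) + 3 < p + q then 1 else 0

lemma plen_eq_idxLen (n : ℕ) {x y : ℤ} (hx : 1 ≤ |x| ∧ |x| ≤ (n : ℤ) + 1)
    (hy : 1 ≤ |y| ∧ |y| ≤ (n : ℤ) + 1) (hxy : |x| ≠ |y|) :
    (plen n x y : ℤ) = idxLen n (idx n x) (idx n y) := by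
  have hx0 : x ≠ 0 := by rintro rfl; simp at hx
  have hy0 : y ≠ 0 := by rintro rfl; simp at hy
  have hcard : (restVals n x y).card + 2 = n + 1 := by
    have := sum_restVals_add n hx hy hxy fun _ => 1
    rwa [← Finset.card_eq_sum_ones, ← Finset.card_eq_sum_ones, Nat.card_Icc] at this
  obtain ⟨k, rfl⟩ : ∃ k, n = k + 1 := ⟨n - 1, by omega⟩
  have hk : (restVals (k + 1) x y).card = k := by omega
  set e := (restVals (k + 1) x y).orderEmbOfFin hk
  have he : StrictMono fun j => (e j : ℤ) := Nat.strictMono_cast.comp e.strictMono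
  have hpos : ∀ j, 0 < (e j : ℤ) := fun j =>
    Nat.cast_pos.2 (Finset.mem_Icc.1 (Finset.mem_filter.1 (Finset.orderEmbOfFin_mem _ hk j)).1).1
  have hsum : ∑ j, (pairInv x (e j) + pairInv y (e j)) =
      ∑ v ∈ restVals (k + 1) x y, (pairInv x v + pairInv y v) := by
    rw [← Finset.map_orderEmbOfFin_univ _ hk, Finset.sum_map]
    rfl
  -- Each entry has `idx - 1` inversions against all of `1, …, n+1`; the tail omits `|x|, |y|`.
  have hrest := sum_restVals_add (k + 1) hx hy hxy fun v => pairInv x v + pairInv y v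
  simp only [Int.natCast_natAbs, pairInv_abs_self] at hrest
  have hIcc : ∑ v ∈ Finset.Icc 1 (k + 1 + 1), (pairInv x v + pairInv y v) =
      ∑ v ∈ Finset.Icc 1 (k + 1 + 1), pairInv x v + ∑ v ∈ Finset.Icc 1 (k + 1 + 1), pairInv y v :=
    Finset.sum_add_distrib
  have hIx := sum_pairInv_Icc (k + 1) hx0 hx.2
  have hIy := sum_pairInv_Icc (k + 1) hy0 hy.2
  have hcross := pairInv_abs_add_pairInv_abs (k + 1) hx0 hy0 hx.2 hy.2 hxy
  rw [plen, minRep_eq_cons k x y hk, clen_cons_cons x y he hpos, hsum, idxLen]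
  split_ifs at hrest hcross ⊢ <;> omega

def IsIdxPair (n : ℕ) (p q : ℤ) : Prop :=
  1 ≤ p ∧ p ≤ 2 * n + 1 ∧ 1 ≤ q ∧ q ≤ 2 * n + 1 ∧ p ≠ q ∧ p + q ≠ 2 * n + 3

/- For `p < q` swapping the entries is a cover. For `p > q`, raising `q` by one is a cover
unless `q + 1` is forbidden (`q + 1 = p` or `p + q + 1 = 2n + 3`); then raise `q` by two, or,
where that is forbidden too, raise both entries or only `p`. -/
lemma exists_idxCover {n : ℕ} (hn : 2 ≤ n) {p q : ℤ} (h : IsIdxPair n p q)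
    (htop : ¬(p = 2 * n + 1 ∧ q = 2 * n)) :
    ∃ p' q', IsIdxPair n p' q' ∧ p ≤ p' ∧ min p q ≤ min p' q' ∧ max p q ≤ max p' q' ∧
      (p ≠ p' ∨ q ≠ q') ∧ idxLen n p' q' = idxLen n p q + 1 := by
  unfold IsIdxPair at h ⊢
  unfold idxLen
  rcases lt_or_gt_of_ne h.2.2.2.2.1 with hlt | hgt
  · exact ⟨q, p, by split_ifs <;> omega⟩
  by_cases hadj : p = q + 1
  · by_cases hq : q = n
    · exact ⟨p + 1, q, by split_ifs <;> omega⟩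
    · exact ⟨p, q + 2, by split_ifs <;> omega⟩
  by_cases hsum : p + q = 2 * n + 2
  · by_cases hgap : p = q + 2
    · exact ⟨p + 1, q + 1, by split_ifs <;> omega⟩
    · exact ⟨p, q + 2, by split_ifs <;> omega⟩
  · exact ⟨p, q + 1, by split_ifs <;> omega⟩

def ofIdx (n : ℕ) (r : ℤ) : ℤ := if r ≤ n + 1 then r else r - (2 * n + 3)

lemma idx_ofIdx {n : ℕ} {r : ℤ} (h1 : 1 ≤ r) (h2 : r ≤ 2 * n + 2) : idx n (ofIdx n r) = r := by
  unfold idx ofIdx; split_ifs <;> omega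

lemma ofIdx_idx {n : ℕ} {x : ℤ} (hxn : |x| ≤ n + 1) : ofIdx n (idx n x) = x := by
  unfold idx ofIdx
  rw [abs_eq_max_neg] at hxn
  split_ifs <;> omega

lemma isIdxPair_idx {n : ℕ} {x y : ℤ} (hx : 1 ≤ |x| ∧ |x| ≤ (n : ℤ) + 1)
    (hy : 1 ≤ |y| ∧ |y| ≤ (n : ℤ) + 1) (hxy : |x| ≠ |y|) (hox : x ≠ -1) (hoy : y ≠ -1) :
    IsIdxPair n (idx n x) (idx n y) := by
  unfold IsIdxPair idx
  simp only [abs_eq_max_neg] at hx hy hxy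
  split_ifs <;> omega

lemma ofIdx_mem {n : ℕ} {p q : ℤ} (h : IsIdxPair n p q) :
    (1 ≤ |ofIdx n p| ∧ |ofIdx n p| ≤ (n : ℤ) + 1) ∧
      (1 ≤ |ofIdx n q| ∧ |ofIdx n q| ≤ (n : ℤ) + 1) ∧
      |ofIdx n p| ≠ |ofIdx n q| ∧ ofIdx n p ≠ -1 ∧ ofIdx n q ≠ -1 := by
  unfold IsIdxPair at h
  unfold ofIdx
  simp only [abs_eq_max_neg]
  split_ifs <;> omega

/-- Every element `(x|y)` of `W^odd ∩ W^P` (signed values with `|x|,|y| ≤ n+1`,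
`|x| ≠ |y|`, avoiding the value `1̄ = -1`) other than the maximum
`(2̄|3̄) = (-2|-3)` is covered by another odd symplectic element: there is
`(c|d) ∈ W^odd ∩ W^P` with `(x|y) < (c|d)` in Bruhat order and
`ℓ(c|d) = ℓ(x|y) + 1`. -/
theorem stmt_14 (n : ℕ) (hn : 2 ≤ n) (x y : ℤ)
    (hx : 1 ≤ |x| ∧ |x| ≤ (n : ℤ) + 1) (hy : 1 ≤ |y| ∧ |y| ≤ (n : ℤ) + 1)
    (hxy : |x| ≠ |y|) (hox : x ≠ -1) (hoy : y ≠ -1)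
    (hne : ¬(x = -2 ∧ y = -3)) :
    ∃ c d : ℤ, (1 ≤ |c| ∧ |c| ≤ (n : ℤ) + 1) ∧ (1 ≤ |d| ∧ |d| ≤ (n : ℤ) + 1) ∧
      |c| ≠ |d| ∧ c ≠ -1 ∧ d ≠ -1 ∧
      tabLe n x y c d ∧ (x ≠ c ∨ y ≠ d) ∧
      plen n c d = plen n x y + 1 := by
  have htop : ¬(idx n x = 2 * n + 1 ∧ idx n y = 2 * n) := by
    rintro ⟨h1, h2⟩
    apply hne
    rw [← ofIdx_idx hx.2, ← ofIdx_idx hy.2, h1, h2]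
    unfold ofIdx
    constructor <;> split_ifs <;> omega
  obtain ⟨p, q, hpq, hp, hmin, hmax, hnew, hlen⟩ :=
    exists_idxCover hn (isIdxPair_idx hx hy hxy hox hoy) htop
  obtain ⟨hc, hd, hcd, hc1, hd1⟩ := ofIdx_mem hpq
  have hidx_p : idx n (ofIdx n p) = p := idx_ofIdx hpq.1 (by linarith [hpq.2.1])
  have hidx_q : idx n (ofIdx n q) = q := idx_ofIdx hpq.2.2.1 (by linarith [hpq.2.2.2.1])
  refine ⟨ofIdx n p, ofIdx n q, hc, hd, hcd, hc1, hd1, ?_, ?_, ?_⟩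
  · rw [tabLe, hidx_p, hidx_q]
    exact ⟨hp, hmin, hmax⟩
  · exact hnew.imp (fun h e => h (by rw [e, hidx_p])) fun h e => h (by rw [e, hidx_q])
  · have hold := plen_eq_idxLen n hx hy hxy
    have hnew := plen_eq_idxLen n hc hd hcd
    rw [hidx_p, hidx_q] at hnew
    omega
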